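/- arXiv:2007.13630 — 2 statements merged into one kernel-verified Lean document; each statement's English description precedes it below -/
import Mathlib

section
/- Let B be a real symmetric n×n matrix with B_{ij} ≤ 0 for all i ≠ j. Suppose there exists a vector s ∈ ℝⁿ with s_i > 0 for every i and (Bs)_i ≥ 0 for every i. Then B is positive semidefinite. -/
open Matrix

/-- Let `B` be a real symmetric `n × n` matrix with nonpositive off-diagonal entries.
If there is an entrywise positive vector `s` with `B *ᵥ s` entrywise nonnegative,
then `B` is positive semidefinite, i.e. `xᵀ B x ≥ 0` for all real vectors `x`. -/
theorem stmt_9 (n : ℕ) (B : Matrix (Fin n) (Fin n) ℝ) (hsymm : B.IsSymm)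
    (hoff : ∀ i j : Fin n, i ≠ j → B i j ≤ 0)
    (s : Fin n → ℝ) (hs : ∀ i, 0 < s i) (hBs : ∀ i, 0 ≤ (B *ᵥ s) i) :
    ∀ x : Fin n → ℝ, 0 ≤ x ⬝ᵥ (B *ᵥ x) := by
  intro x
  set y : Fin n → ℝ := fun i => x i / s i with hy
  have hx : ∀ i, x i = s i * y i := fun i => by
    rw [hy]; rw [mul_div_assoc'] ; rw [mul_comm]; rw [mul_div_assoc, div_self (hs i).ne', mul_one]
  have hBsymm : ∀ i j, B j i = B i j := fun i j => by
    have := congrFun (congrFun hsymm.eq j) i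
    simpa [Matrix.transpose_apply] using this.symm
  have key : x ⬝ᵥ (B *ᵥ x) =
      (∑ i, ∑ j, B i j * s i * s j * ((y i)^2 + (y j)^2) / 2)
      - ∑ i, ∑ j, B i j * s i * s j * (y i - y j)^2 / 2 := by
    rw [← Finset.sum_sub_distrib]
    simp only [dotProduct, mulVec, dotProduct, Finset.mul_sum]
    refine Finset.sum_congr rfl fun i _ => ?_
    rw [← Finset.sum_sub_distrib]
    refine Finset.sum_congr rfl fun j _ => ?_
    rw [hx i, hx j]; ring
  have hA : 0 ≤ ∑ i, ∑ j, B i j * s i * s j * ((y i)^2 + (y j)^2) / 2 := by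
    have split : ∀ i j : Fin n, B i j * s i * s j * ((y i)^2 + (y j)^2) / 2
        = B i j * s i * s j * (y i)^2 / 2 + B i j * s i * s j * (y j)^2 / 2 := by
      intro i j; ring
    simp only [split, Finset.sum_add_distrib]
    have hS2 : ∑ i, ∑ j, B i j * s i * s j * (y j)^2 / 2
        = ∑ i, ∑ j, B i j * s i * s j * (y i)^2 / 2 := by
      rw [Finset.sum_comm]
      refine Finset.sum_congr rfl fun i _ => Finset.sum_congr rfl fun j _ => ?_
      rw [hBsymm i j]; ring
    rw [hS2, ← two_mul]
    have hS1 : 0 ≤ ∑ i, ∑ j, B i j * s i * s j * (y i)^2 / 2 := by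
      refine Finset.sum_nonneg fun i _ => ?_
      have : ∑ j, B i j * s i * s j * (y i)^2 / 2
          = (s i * (y i)^2 / 2) * ∑ j, B i j * s j := by
        rw [Finset.mul_sum]
        exact Finset.sum_congr rfl fun j _ => by ring
      rw [this]
      have h1 : 0 ≤ s i * (y i)^2 / 2 :=
        div_nonneg (mul_nonneg (hs i).le (sq_nonneg _)) two_pos.le
      exact mul_nonneg h1 (hBs i)
    positivity
  have hD : ∑ i, ∑ j, B i j * s i * s j * (y i - y j)^2 / 2 ≤ 0 := by
    refine Finset.sum_nonpos fun i _ => Finset.sum_nonpos fun j _ => ?_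
    rcases eq_or_ne i j with rfl | hij
    · simp
    · have h1 : B i j * s i * s j ≤ 0 :=
        mul_nonpos_of_nonpos_of_nonneg
          (mul_nonpos_of_nonpos_of_nonneg (hoff i j hij) (hs i).le) (hs j).le
      have := mul_nonpos_of_nonpos_of_nonneg h1 (sq_nonneg (y i - y j))
      linarith
  linarith
end

section
/- Let d ≥ 3 and let G be a finite simple graph of maximum degree at most d. Let H be a subgraph of G that is bipartite with parts U and V such that every vertex of U has degree d−1 in H and every vertex of V has degree 2 in H. Suppose the spanning subgraph of G with edge set E(G) \ E(H) is a forest, each of whose connected components contains at most one vertex of U ∪ V. Then every complex eigenvalue λ of the nonbacktracking matrix B_G satisfies |λ| ≤ √(d−1). -/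
/-!
Positive weights `w` on directed edges with `∑_{z ∈ N(v) \ {u}} w(v,z) ≤ β w(u,v)` for every
directed edge `(u,v)` bound every eigenvalue of `B_G` by `β` in modulus (compare `|x|/w` at the
directed edge where it is largest). For `β = √(d-1)`, root each tree of the forest `G \ H` at its
vertex of `U ∪ V`, if it has one. An `H`-edge gets weight `1` if it leaves `U` and `β - 1/(2β)` if
it leaves `V`; a forest edge gets `3β` if it points towards the root and `1/(2(β²-1)βᵏ)` if it
points away from the root, into depth `k`. These last weights shrink by the factor `1/β` per level,
which pays for the at most `β² = d - 1` children of a vertex, and at a vertex of `V` entered along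
`H` the bound is tight: `(β - 1/(2β)) + (d - 2)/(2(β²-1)β) = β`.
-/

open Matrix
open scoped Classical

/-- The nonbacktracking matrix of a simple graph `G`, indexed by directed edges
(ordered pairs of adjacent vertices), with entries in a semiring `α`:
`B[(u,v),(w,x)] = 1` iff `v = w` and `u ≠ x`. -/
noncomputable def nonbacktrackingMatrix {V : Type*} (G : SimpleGraph V) (α : Type*)
    [Zero α] [One α] :
    Matrix {e : V × V // G.Adj e.1 e.2} {e : V × V // G.Adj e.1 e.2} α :=
  fun e f => if (e : V × V).2 = (f : V × V).1 ∧ (e : V × V).1 ≠ (f : V × V).2 then 1 else 0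

open SimpleGraph Finset

namespace SimpleGraph

variable {W : Type*} {F : SimpleGraph W}

lemma IsAcyclic.subsingleton_adj_dist_lt (hF : F.IsAcyclic) (r v : W) :
    {x | F.Adj v x ∧ F.Reachable r x ∧ F.dist r x < F.dist r v}.Subsingleton := by
  suffices hpen : ∀ p : F.Walk r v, p.IsPath → ∀ x, F.Adj v x → F.Reachable r x →
      F.dist r x < F.dist r v → x = p.penultimate by
    rintro x ⟨hvx, hrx, hx⟩ y ⟨hvy, hry, hy⟩
    obtain ⟨p, hp⟩ := (hrx.trans hvx.symm.reachable).exists_isPath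
    rw [hpen p hp x hvx hrx hx, hpen p hp y hvy hry hy]
  intro p hp x hvx hrx hlt
  obtain ⟨q, hq, hqlen⟩ := hrx.exists_path_of_dist
  refine hF.eq_penultimate_of_adj_end hp hvx
    (hF.mem_support_of_ne_mem_support_of_adj_of_isPath hp hq hvx fun hv => ?_)
  have := F.dist_le (q.takeUntil v hv)
  have := q.length_takeUntil_le_length hv
  omega

structure IsLevelFunction (F : SimpleGraph W) (h : W → ℕ) : Prop where
  adj : ∀ ⦃a b⦄, F.Adj a b → h b = h a + 1 ∨ h a = h b + 1
  subsingleton_lt : ∀ v, {x | F.Adj v x ∧ h x < h v}.Subsingleton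

lemma IsAcyclic.exists_isLevelFunction (hF : F.IsAcyclic) {S : Set W}
    (hS : ∀ a ∈ S, ∀ b ∈ S, F.Reachable a b → a = b) :
    ∃ h : W → ℕ, F.IsLevelFunction h ∧ ∀ s ∈ S, h s = 0 := by
  let root (C : F.ConnectedComponent) : W :=
    if hC : ∃ s ∈ S, F.connectedComponentMk s = C then hC.choose else C.out
  have root_mem (C) : F.connectedComponentMk (root C) = C := by
    unfold root
    split_ifs with hC
    exacts [hC.choose_spec.2, C.out_eq]
  have root_of_mem (s) (hs : s ∈ S) : root (F.connectedComponentMk s) = s := by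
    have hC : ∃ t ∈ S, F.connectedComponentMk t = F.connectedComponentMk s := ⟨s, hs, rfl⟩
    simp only [root, dif_pos hC]
    exact hS _ hC.choose_spec.1 _ hs (ConnectedComponent.exact hC.choose_spec.2)
  have reach (v) : F.Reachable (root (F.connectedComponentMk v)) v :=
    ConnectedComponent.exact (root_mem _)
  refine ⟨fun v => F.dist (root (F.connectedComponentMk v)) v, ⟨fun a b hab => ?_, fun v => ?_⟩,
    fun s hs => by simp only [root_of_mem s hs, dist_self]⟩
  · rw [← ConnectedComponent.sound hab.reachable]
    exact (hF.dist_eq_dist_add_one_of_adj_of_reachable _ hab (reach a)).symm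
  · rintro x ⟨hvx, hx⟩ y ⟨hvy, hy⟩
    simp only [← ConnectedComponent.sound hvx.reachable,
      ← ConnectedComponent.sound hvy.reachable] at hx hy
    exact hF.subsingleton_adj_dist_lt _ v ⟨hvx, (reach v).trans hvx.reachable, hx⟩
      ⟨hvy, (reach v).trans hvy.reachable, hy⟩

section Finite

variable [Fintype W]

structure IsBiregular (H : SimpleGraph W) (U V : Set W) (p q : ℕ) : Prop where
  disjoint : Disjoint U V
  adj : ∀ ⦃a b⦄, H.Adj a b → a ∈ U ∧ b ∈ V ∨ a ∈ V ∧ b ∈ U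
  degree_left : ∀ u ∈ U, H.degree u = p
  degree_right : ∀ v ∈ V, H.degree v = q

lemma IsBiregular.not_adj_of_not_mem {H : SimpleGraph W} {U V : Set W} {p q : ℕ}
    (hB : H.IsBiregular U V p q) {v : W} (hv : v ∉ U ∪ V) (z : W) : ¬ H.Adj v z := fun h =>
  hv <| (hB.adj h).elim (fun h => Or.inl h.1) (fun h => Or.inr h.1)

lemma neighborFinset_eq_union_sdiff {G H : SimpleGraph W} (hsub : H ≤ G) (v : W) :
    G.neighborFinset v = H.neighborFinset v ∪ (G \ H).neighborFinset v := by
  ext z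
  simp only [mem_union, mem_neighborFinset, sdiff_adj]
  have := @hsub v z
  tauto

lemma disjoint_neighborFinset_sdiff (G H : SimpleGraph W) (v : W) :
    Disjoint (H.neighborFinset v) ((G \ H).neighborFinset v) :=
  disjoint_neighborFinset_of_disjoint _ _ v disjoint_sdiff_self_right

lemma sum_erase_neighborFinset_eq_add_sdiff {G H : SimpleGraph W} (hsub : H ≤ G) (f : W → ℝ)
    (u v : W) :
    ∑ z ∈ (G.neighborFinset v).erase u, f z =
      ∑ z ∈ (H.neighborFinset v).erase u, f z + ∑ z ∈ ((G \ H).neighborFinset v).erase u, f z := by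
  rw [neighborFinset_eq_union_sdiff hsub, erase_union_distrib, sum_union
    ((disjoint_neighborFinset_sdiff G H v).mono (erase_subset _ _) (erase_subset _ _))]

lemma card_neighborFinset_add_card_sdiff {G H : SimpleGraph W} (hsub : H ≤ G) (v : W) :
    (H.neighborFinset v).card + ((G \ H).neighborFinset v).card = G.degree v := by
  rw [← card_union_of_disjoint (disjoint_neighborFinset_sdiff G H v),
    ← neighborFinset_eq_union_sdiff hsub, card_neighborFinset_eq_degree]

end Finite

end SimpleGraph

theorem Matrix.norm_le_of_mulVec_eq_smul_of_row_sum_le {𝕜 E : Type*} [NormedField 𝕜] [Fintype E]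
    (M : Matrix E E 𝕜) (w : E → ℝ) (hw : ∀ e, 0 < w e) (c : ℝ)
    (hrow : ∀ e, ∑ f, ‖M e f‖ * w f ≤ c * w e) {lam : 𝕜} {x : E → 𝕜} (hx : x ≠ 0)
    (heig : M *ᵥ x = lam • x) : ‖lam‖ ≤ c := by
  obtain ⟨e₁, he₁⟩ := Function.ne_iff.mp hx
  have : Nonempty E := ⟨e₁⟩
  obtain ⟨e₀, he₀⟩ := Finite.exists_max fun e => ‖x e‖ / w e
  set g := ‖x e₀‖ / w e₀
  have hg : 0 < g := (div_pos (norm_pos_iff.mpr he₁) (hw e₁)).trans_le (he₀ e₁)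
  have hxe₀ : ‖x e₀‖ = g * w e₀ := (div_mul_cancel₀ _ (hw e₀).ne').symm
  have key : ‖lam‖ * ‖x e₀‖ ≤ c * ‖x e₀‖ := calc
    ‖lam‖ * ‖x e₀‖ = ‖(M *ᵥ x) e₀‖ := by rw [heig, Pi.smul_apply, smul_eq_mul, norm_mul]
    _ ≤ ∑ f, ‖M e₀ f‖ * ‖x f‖ := by
      simpa only [mulVec, dotProduct, norm_mul] using norm_sum_le univ fun f => M e₀ f * x f
    _ ≤ ∑ f, ‖M e₀ f‖ * (g * w f) := by
      gcongr with f
      exact (div_le_iff₀ (hw f)).mp (he₀ f)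
    _ = g * ∑ f, ‖M e₀ f‖ * w f := by
      rw [mul_sum]
      exact sum_congr rfl fun f _ => by ring
    _ ≤ g * (c * w e₀) := by gcongr; exact hrow e₀
    _ = c * ‖x e₀‖ := by rw [hxe₀]; ring
  exact le_of_mul_le_mul_right key (by rw [hxe₀]; exact mul_pos hg (hw e₀))

lemma sum_norm_nonbacktrackingMatrix_mul {W 𝕜 : Type*} [Fintype W] [NormedRing 𝕜]
    [NormOneClass 𝕜] (G : SimpleGraph W) (w : W → W → ℝ) (e : {e : W × W // G.Adj e.1 e.2}) :
    ∑ f, ‖nonbacktrackingMatrix G 𝕜 e f‖ * w f.1.1 f.1.2 =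
      ∑ z ∈ (G.neighborFinset e.1.2).erase e.1.1, w e.1.2 z := by
  simp only [nonbacktrackingMatrix, apply_ite norm, norm_one, norm_zero, ite_mul, one_mul,
    zero_mul, ← sum_filter]
  refine sum_nbij' (fun f => f.1.2)
    (fun z => if h : G.Adj e.1.2 z then ⟨(e.1.2, z), h⟩ else e) ?_ ?_ ?_ ?_ ?_ <;>
  simp only [mem_filter, mem_univ, true_and, mem_erase, mem_neighborFinset, Subtype.forall,
    Prod.forall]
  · rintro a b hab ⟨rfl, h⟩
    exact ⟨Ne.symm h, hab⟩
  · rintro z ⟨hz, h⟩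
    simp [h, Ne.symm hz]
  · rintro a b hab ⟨rfl, -⟩
    simp [hab]
  · rintro z ⟨-, h⟩
    simp [h]
  · rintro a b hab ⟨rfl, -⟩
    rfl

theorem norm_le_of_nonbacktracking_row_sum_le {W 𝕜 : Type*} [Fintype W] [NormedField 𝕜]
    (G : SimpleGraph W) (w : W → W → ℝ) (hw : ∀ a b, G.Adj a b → 0 < w a b) (c : ℝ)
    (hrow : ∀ u v, G.Adj u v → ∑ z ∈ (G.neighborFinset v).erase u, w v z ≤ c * w u v)
    {lam : 𝕜} {x : {e : W × W // G.Adj e.1 e.2} → 𝕜} (hx : x ≠ 0)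
    (heig : nonbacktrackingMatrix G 𝕜 *ᵥ x = lam • x) : ‖lam‖ ≤ c :=
  (nonbacktrackingMatrix G 𝕜).norm_le_of_mulVec_eq_smul_of_row_sum_le (fun e => w e.1.1 e.1.2)
    (fun e => hw _ _ e.2) c
    (fun e => (sum_norm_nonbacktrackingMatrix_mul G w e).trans_le (hrow _ _ e.2)) hx heig

noncomputable def awayWeight (β : ℝ) (k : ℕ) : ℝ := 1 / (2 * (β ^ 2 - 1) * β ^ k)

section awayWeight

variable {β : ℝ}

lemma awayWeight_pos (hβ : 1 < β) (k : ℕ) : 0 < awayWeight β k := by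
  have : 1 < β ^ 2 := by nlinarith
  unfold awayWeight
  exact div_pos one_pos (mul_pos (by linarith) (pow_pos (by linarith) k))

lemma awayWeight_succ_le (hβ : 1 < β) (k : ℕ) : awayWeight β (k + 1) ≤ awayWeight β 1 := by
  have : 1 < β ^ 2 := by nlinarith
  unfold awayWeight
  gcongr
  · linarith
  · omega

lemma sq_mul_awayWeight_succ (hβ : 1 < β) (k : ℕ) :
    β ^ 2 * awayWeight β (k + 1) = β * awayWeight β k := by
  have : β ^ 2 - 1 ≠ 0 := by nlinarith
  have : β ≠ 0 := by positivity
  unfold awayWeight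
  field_simp
  ring

lemma sq_sub_one_mul_awayWeight_one (hβ : 1 < β) :
    (β ^ 2 - 1) * awayWeight β 1 = 1 / (2 * β) := by
  have : β ^ 2 - 1 ≠ 0 := by nlinarith
  have : β ≠ 0 := by positivity
  unfold awayWeight
  field_simp

lemma sq_mul_awayWeight_one_le_one (hβ0 : 0 < β) (hβ : 2 ≤ β ^ 2) : β ^ 2 * awayWeight β 1 ≤ 1 := by
  have hβ1 : 1 < β := by nlinarith
  have h₁ := sq_sub_one_mul_awayWeight_one hβ1
  have h₂ := awayWeight_pos hβ1 1
  have h₃ : 1 / (2 * β) ≤ 1 / 2 := by gcongr; linarith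
  nlinarith

end awayWeight

section edgeWeight

variable {W : Type*} {G H : SimpleGraph W} {U V : Set W} {d : ℕ} {dep : W → ℕ} {β : ℝ}

noncomputable def edgeWeight (H : SimpleGraph W) (U : Set W) (dep : W → ℕ) (β : ℝ) (a b : W) :
    ℝ :=
  if H.Adj a b then if a ∈ U then 1 else β - 1 / (2 * β)
  else if dep b < dep a then 3 * β else awayWeight β (dep b)

lemma edgeWeight_pos (hβ : 1 < β) (a b : W) : 0 < edgeWeight H U dep β a b := by
  have : 1 / (2 * β) < β := by
    rw [div_lt_iff₀ (by linarith)]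
    nlinarith
  unfold edgeWeight
  split_ifs
  exacts [one_pos, by linarith, by linarith, awayWeight_pos hβ _]

lemma edgeWeight_of_forall_not_adj (hdep : (G \ H).IsLevelFunction dep) {v z : W}
    (hnH : ∀ z, ¬ H.Adj v z) (hvz : G.Adj v z) :
    edgeWeight H U dep β v z = if dep z < dep v then 3 * β else awayWeight β (dep v + 1) := by
  have hvz' : (G \ H).Adj v z := ⟨hvz, hnH z⟩
  split_ifs with h
  · simp [edgeWeight, hvz'.2, h]
  · have hz : dep z = dep v + 1 := (hdep.adj hvz').resolve_right (by omega)
    simp [edgeWeight, hvz'.2, hz]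

variable [Fintype W]

lemma sum_edgeWeight_erase_neighborFinset_eq (u v : W) :
    ∑ z ∈ (H.neighborFinset v).erase u, edgeWeight H U dep β v z =
      ((H.neighborFinset v).erase u).card * if v ∈ U then 1 else β - 1 / (2 * β) := by
  rw [sum_congr rfl fun z hz => by
    rw [edgeWeight, if_pos ((mem_neighborFinset _ _ _).mp (mem_of_mem_erase hz))],
    sum_const, nsmul_eq_mul]

lemma sum_edgeWeight_erase_sdiff_le (hβ : 1 < β) (hdep : (G \ H).IsLevelFunction dep) {v : W}
    (hv : dep v = 0) (hcard : (((G \ H).neighborFinset v).card : ℝ) ≤ β ^ 2 - 1) (u : W) :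
    ∑ z ∈ ((G \ H).neighborFinset v).erase u, edgeWeight H U dep β v z ≤ 1 / (2 * β) := by
  have hw : ∀ z ∈ ((G \ H).neighborFinset v).erase u,
      edgeWeight H U dep β v z = awayWeight β 1 := by
    intro z hz
    have hvz : (G \ H).Adj v z := (mem_neighborFinset _ _ _).mp (mem_of_mem_erase hz)
    have hz : dep z = 1 := by rcases hdep.adj hvz with h | h <;> omega
    simp [edgeWeight, hvz.2, hz, hv]
  rw [sum_congr rfl hw, sum_const, nsmul_eq_mul, ← sq_sub_one_mul_awayWeight_one hβ]
  gcongr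
  · exact (awayWeight_pos hβ 1).le
  · exact (Nat.cast_le.mpr card_erase_le).trans hcard

lemma sum_edgeWeight_erase_sdiff_le_of_mem (hsub : H ≤ G) (hmax : ∀ v, G.degree v ≤ d)
    (hB : H.IsBiregular U V (d - 1) 2) (hdep : (G \ H).IsLevelFunction dep) (hd : 3 ≤ d)
    (hβ : β ^ 2 = d - 1) (hβ1 : 1 < β) {v : W} (hv : v ∈ U ∪ V) (hv0 : dep v = 0) (u : W) :
    ∑ z ∈ ((G \ H).neighborFinset v).erase u, edgeWeight H U dep β v z ≤ 1 / (2 * β) := by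
  refine sum_edgeWeight_erase_sdiff_le hβ1 hdep hv0 ?_ u
  have hHdeg : 2 ≤ H.degree v := by
    rcases hv with hv | hv
    · rw [hB.degree_left v hv]; omega
    · rw [hB.degree_right v hv]
  have := hmax v
  have := card_neighborFinset_add_card_sdiff hsub v
  rw [card_neighborFinset_eq_degree] at this
  rw [hβ, show (d : ℝ) - 1 - 1 = (d - 2 : ℕ) by push_cast [show 2 ≤ d by omega]; ring,
    Nat.cast_le]
  omega

lemma rowSum_edgeWeight_le_of_mem (hsub : H ≤ G) (hmax : ∀ v, G.degree v ≤ d)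
    (hB : H.IsBiregular U V (d - 1) 2) (hdep : (G \ H).IsLevelFunction dep) (hd : 3 ≤ d)
    (hβ : β ^ 2 = d - 1) (hβ0 : 0 < β) {u v : W} (huv : G.Adj u v) (hv : v ∈ U ∪ V)
    (hv0 : dep v = 0) :
    ∑ z ∈ (G.neighborFinset v).erase u, edgeWeight H U dep β v z ≤
      β * edgeWeight H U dep β u v := by
  have hd' : (3 : ℝ) ≤ d := by exact_mod_cast hd
  have hβ1 : 1 < β := by nlinarith
  have hF := sum_edgeWeight_erase_sdiff_le_of_mem hsub hmax hB hdep hd hβ hβ1 hv hv0 u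
  have hF' : 1 / (2 * β) ≤ 1 / 2 := by gcongr; linarith
  have hq : β * (β - 1 / (2 * β)) = β ^ 2 - 1 / 2 := by field_simp
  rw [sum_erase_neighborFinset_eq_add_sdiff hsub, sum_edgeWeight_erase_neighborFinset_eq]
  by_cases hH : H.Adj u v
  · have hcardH : ((H.neighborFinset v).erase u).card = H.degree v - 1 := by
      rw [card_erase_of_mem ((mem_neighborFinset _ _ _).mpr hH.symm),
        card_neighborFinset_eq_degree]
    rcases hB.adj hH with ⟨huU, hvV⟩ | ⟨huV, hvU⟩
    · have hvU : v ∉ U := Set.disjoint_right.mp hB.disjoint hvV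
      have hw : edgeWeight H U dep β u v = 1 := by simp [edgeWeight, hH, huU]
      rw [hw, if_neg hvU, hcardH, hB.degree_right v hvV]
      have : ((2 - 1 : ℕ) : ℝ) = 1 := by norm_num
      rw [this]
      linarith
    · have huU : u ∉ U := Set.disjoint_right.mp hB.disjoint huV
      have hw : edgeWeight H U dep β u v = β - 1 / (2 * β) := by simp [edgeWeight, hH, huU]
      have : ((d - 1 - 1 : ℕ) : ℝ) = β ^ 2 - 1 := by
        rw [Nat.sub_sub, hβ]; push_cast [show 2 ≤ d by omega]; ring
      rw [hw, if_pos hvU, hcardH, hB.degree_left v hvU, hq, this]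
      linarith
  · have hu1 : dep u = 1 := by rcases hdep.adj ⟨huv, hH⟩ with h | h <;> omega
    have hw : edgeWeight H U dep β u v = 3 * β := by simp [edgeWeight, hH, hu1, hv0]
    have hcardH := (Nat.cast_le (α := ℝ)).mpr
      ((card_erase_le (s := H.neighborFinset v) (a := u)).trans_eq
        (card_neighborFinset_eq_degree H v))
    rw [hw]
    split_ifs with hvU
    · rw [hB.degree_left v hvU] at hcardH
      push_cast [show 1 ≤ d by omega] at hcardH
      nlinarith
    · rw [hB.degree_right v (hv.resolve_left hvU)] at hcardH
      have hq0 : 0 ≤ β - 1 / (2 * β) := by linarith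
      nlinarith [mul_le_mul_of_nonneg_right hcardH hq0]

lemma rowSum_edgeWeight_le_of_not_mem (hmax : ∀ v, G.degree v ≤ d)
    (hB : H.IsBiregular U V (d - 1) 2) (hdep : (G \ H).IsLevelFunction dep) (hd : 3 ≤ d)
    (hβ : β ^ 2 = d - 1) (hβ0 : 0 < β) {u v : W} (huv : G.Adj u v) (hv : v ∉ U ∪ V) :
    ∑ z ∈ (G.neighborFinset v).erase u, edgeWeight H U dep β v z ≤
      β * edgeWeight H U dep β u v := by
  have hd' : (3 : ℝ) ≤ d := by exact_mod_cast hd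
  have hβ1 : 1 < β := by nlinarith
  set S := (G.neighborFinset v).erase u
  have hS : ∀ z ∈ S, G.Adj v z := fun z hz => (mem_neighborFinset _ _ _).mp (mem_of_mem_erase hz)
  have hcard : (S.card : ℝ) ≤ β ^ 2 := by
    rw [card_erase_of_mem ((mem_neighborFinset _ _ _).mpr huv.symm),
      card_neighborFinset_eq_degree, hβ]
    have := hmax v
    have : 1 ≤ G.degree v := (G.degree_pos_iff_exists_adj v).mpr ⟨u, huv.symm⟩
    push_cast [this]
    gcongr
  have hnH := hB.not_adj_of_not_mem hv
  have hlow : ∀ z ∈ S, dep z < dep v → (G \ H).Adj v z ∧ dep z < dep v := fun z hz h =>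
    ⟨⟨hS z hz, hnH z⟩, h⟩
  have hvu : (G \ H).Adj v u := ⟨huv.symm, hnH u⟩
  have huH : ¬ H.Adj u v := fun h => hnH u h.symm
  have hhigh := (Nat.cast_le (α := ℝ)).mpr (card_filter_le S fun z => ¬ dep z < dep v)
  rw [sum_congr rfl fun z hz => edgeWeight_of_forall_not_adj hdep hnH (hS z hz), sum_ite,
    sum_const, sum_const, nsmul_eq_mul, nsmul_eq_mul]
  rcases hdep.adj hvu with hu | hv'
  · have hone : (S.filter fun z => dep z < dep v).card ≤ 1 :=
      card_le_one.mpr fun a ha b hb => by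
        rw [mem_filter] at ha hb
        exact hdep.subsingleton_lt v (hlow a ha.1 ha.2) (hlow b hb.1 hb.2)
    have hw : edgeWeight H U dep β u v = 3 * β := by simp [edgeWeight, huH, hu]
    have haway := sq_mul_awayWeight_one_le_one hβ0 (by linarith)
    have := mul_le_mul (hhigh.trans hcard) (awayWeight_succ_le hβ1 (dep v))
      (awayWeight_pos hβ1 _).le (sq_nonneg β)
    have := mul_le_of_le_one_left (by positivity : 0 ≤ 3 * β) (Nat.cast_le_one.mpr hone)
    rw [hw]
    nlinarith
  · have hnone : S.filter (fun z => dep z < dep v) = ∅ :=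
      filter_eq_empty_iff.mpr fun z hz h =>
        ne_of_mem_erase hz (hdep.subsingleton_lt v (hlow z hz h) ⟨hvu, by omega⟩)
    have hw : edgeWeight H U dep β u v = awayWeight β (dep v) := by simp [edgeWeight, huH, hv']
    rw [hnone, card_empty, Nat.cast_zero, zero_mul, zero_add, hw,
      ← sq_mul_awayWeight_succ hβ1]
    gcongr
    · exact (awayWeight_pos hβ1 _).le
    · exact hhigh.trans hcard

lemma rowSum_edgeWeight_le (hsub : H ≤ G) (hmax : ∀ v, G.degree v ≤ d)
    (hB : H.IsBiregular U V (d - 1) 2) (hdep : (G \ H).IsLevelFunction dep)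
    (hdep0 : ∀ s ∈ U ∪ V, dep s = 0) (hd : 3 ≤ d) (hβ : β ^ 2 = d - 1) (hβ0 : 0 < β)
    {u v : W} (huv : G.Adj u v) :
    ∑ z ∈ (G.neighborFinset v).erase u, edgeWeight H U dep β v z ≤
      β * edgeWeight H U dep β u v := by
  by_cases hv : v ∈ U ∪ V
  · exact rowSum_edgeWeight_le_of_mem hsub hmax hB hdep hd hβ hβ0 huv hv (hdep0 v hv)
  · exact rowSum_edgeWeight_le_of_not_mem hmax hB hdep hd hβ hβ0 huv hv

end edgeWeight

/-- Let `G` be a finite graph of maximum degree at most `d ≥ 3`, and `H ≤ G` a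
`(2, d-1)`-biregular subgraph with parts `U` (degrees `d-1`) and `V` (degrees `2`).
If the spanning subgraph of `G` with edge set `E(G) \ E(H)` is a forest, each of
whose connected components contains at most one vertex of `U ∪ V`, then every
complex eigenvalue of the nonbacktracking matrix of `G` has absolute value at most
`√(d-1)`. -/
theorem stmt_12 {W : Type*} [Fintype W] (d : ℕ) (hd : 3 ≤ d)
    (G H : SimpleGraph W) (hsub : H ≤ G)
    (hmaxdeg : ∀ v : W, G.degree v ≤ d)
    (U V : Set W) (hUV : Disjoint U V)
    (hbip : ∀ a b : W, H.Adj a b → (a ∈ U ∧ b ∈ V) ∨ (a ∈ V ∧ b ∈ U))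
    (hUdeg : ∀ u ∈ U, H.degree u = d - 1)
    (hVdeg : ∀ v ∈ V, H.degree v = 2)
    (hforest : (G \ H).IsAcyclic)
    (hcomp : ∀ a ∈ U ∪ V, ∀ b ∈ U ∪ V, (G \ H).Reachable a b → a = b)
    (lam : ℂ) (x : {e : W × W // G.Adj e.1 e.2} → ℂ) (hx : x ≠ 0)
    (heig : nonbacktrackingMatrix G ℂ *ᵥ x = lam • x) :
    ‖lam‖ ≤ Real.sqrt (d - 1) := by
  have hd' : (3 : ℝ) ≤ d := by exact_mod_cast hd
  have hβ : Real.sqrt (d - 1) ^ 2 = d - 1 := Real.sq_sqrt (by linarith)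
  have hβ0 : 0 < Real.sqrt (d - 1) := Real.sqrt_pos.mpr (by linarith)
  have hβ1 : 1 < Real.sqrt (d - 1) := by nlinarith
  have hB : H.IsBiregular U V (d - 1) 2 := ⟨hUV, hbip, hUdeg, hVdeg⟩
  obtain ⟨dep, hdep, hdep0⟩ := hforest.exists_isLevelFunction hcomp
  exact norm_le_of_nonbacktracking_row_sum_le G (edgeWeight H U dep _)
    (fun a b _ => edgeWeight_pos hβ1 a b) _
    (fun u v huv => rowSum_edgeWeight_le hsub hmaxdeg hB hdep hdep0 hd hβ hβ0 huv) hx heig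
end
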